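/- For a prime p and a positive integer r, p is a sparsely Schemmel totient number of order r if and only if r < p < (p_{b(r)+1} − r)(p_{b(r)+2} − r) + r. -/

import Mathlib

/-- The Schemmel totient function of order `r` (multiplicative, with
`S r (p^a) = p^(a-1) * (p - r)`; note `p - r = 0` in `ℕ` when `p ≤ r`). -/
def S (r n : ℕ) : ℕ := ∏ q ∈ n.primeFactors, q ^ (n.factorization q - 1) * (q - r)

/-- `b r` is the number of primes `≤ r`. -/
def b (r : ℕ) : ℕ := ((Finset.range (r + 1)).filter Nat.Prime).card

/-- `p i` is the `i`-th prime (`p 1 = 2`, `p 2 = 3`, ...). -/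
noncomputable def p (i : ℕ) : ℕ := Nat.nth Nat.Prime (i - 1)

/-- `n` is a sparsely Schemmel totient number of order `r`. -/
def SST (r n : ℕ) : Prop := 0 < S r n ∧ ∀ m : ℕ, n < m → 0 < S r m → S r n < S r m

/-- Jacobsthal function: the smallest `a` such that every `a` consecutive
integers contain one coprime to `N`. -/
noncomputable def J (N : ℕ) : ℕ := sInf {a : ℕ | ∀ x : ℕ, ∃ y ∈ Finset.Ico x (x + a), Nat.Coprime y N}

/-- `Pk k n` is the `k`-th largest prime divisor of `n` (or `0` if `ω(n) < k`). -/
def Pk (k n : ℕ) : ℕ := ((n.primeFactors.sort (· ≤ ·)).reverse).getD (k - 1) 0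

/-- `Qk r k n` is the `k`-th smallest prime greater than `r` not dividing `n`. -/
noncomputable def Qk (r k n : ℕ) : ℕ := Nat.nth (fun q : ℕ => q.Prime ∧ r < q ∧ ¬ q ∣ n) (k - 1)

/-- `Rn n` is `n` divided by the product of its distinct prime factors. -/
def Rn (n : ℕ) : ℕ := n / ∏ q ∈ n.primeFactors, q

/-!
For a prime `q` we have `S r q = q - r`, so `q` is sparsely Schemmel totient exactly when
`r < q` and every `m > q` with `S r m > 0` has `S r m > q - r`. Let `P₁ < P₂` be the two
smallest primes above `r`. A prime `m > q` has `S r m = m - r > q - r`, while every composite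
`m` in `B_r` has `S r m ≥ (P₁ - r) (P₂ - r)`: clear with two distinct prime factors, and for
`m = s ^ k`, `k ≥ 2`, it follows from `P₂ ≤ P₁ + r`. That in turn holds because `(r, 2 r + 1]`
contains two primes: if `(n, 2 n]` contained at most one, the central binomial coefficient
would be at most `(2 n) ^ (√(2 n) + 1) 4 ^ (2 n / 3)`, contradicting `4 ^ n < n C(2n, n)`
for `n ≥ 512`. Conversely, if `q ≥ (P₁ - r) (P₂ - r) + r`, then `P₁ P₂` or `P₁ s`, for a
Bertrand prime `s` above `q / P₁`, is an `m > q` with `0 < S r m ≤ q - r`.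
-/

open Real in
theorem rpow_sqrt_add_two_le_two_rpow {y : ℝ} (hy : 1024 ≤ y) : y ^ (√y + 2) ≤ 2 ^ (y / 3) := by
  set g : ℝ → ℝ := fun y => √y * log y + 2 * log y - log 2 / 3 * y with hg
  have hconc : ConcaveOn ℝ (Set.Ioi 1) g :=
    (strictConcaveOn_sqrt_mul_log_Ioi.concaveOn.add
      ((strictConcaveOn_log_Ioi.concaveOn.subset (Set.Ioi_subset_Ioi zero_le_one)
        (convex_Ioi 1)).smul zero_le_two)).sub
      ((convexOn_id (convex_Ioi 1)).smul (by positivity))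
  -- `g` is concave, nonnegative at `4` and nonpositive at `1024`, hence nonpositive beyond.
  have hlog2 : 0 < log 2 := log_pos one_lt_two
  have hsqrt4 : √(4 : ℝ) = 2 := by
    rw [show (4 : ℝ) = 2 ^ 2 by norm_num, sqrt_sq zero_le_two]
  have hsqrt1024 : √(1024 : ℝ) = 32 := by
    rw [show (1024 : ℝ) = 32 ^ 2 by norm_num, sqrt_sq (by norm_num)]
  have hlog4 : log (4 : ℝ) = 2 * log 2 := by
    rw [show (4 : ℝ) = 2 ^ 2 by norm_num, log_pow]; push_cast; ring
  have hlog1024 : log (1024 : ℝ) = 10 * log 2 := by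
    rw [show (1024 : ℝ) = 2 ^ 10 by norm_num, log_pow]; push_cast; ring
  have hg4 : 0 ≤ g 4 := by simp only [hg, hsqrt4, hlog4]; nlinarith
  have hg1024 : g 1024 ≤ 0 := by simp only [hg, hsqrt1024, hlog1024]; nlinarith
  have hgy : g y ≤ 0 :=
    (hconc.right_le_of_le_left'' (by norm_num : (4 : ℝ) ∈ Set.Ioi 1)
      (show y ∈ Set.Ioi 1 by simp only [Set.mem_Ioi]; linarith)
      (by norm_num) hy (hg1024.trans hg4)).trans hg1024
  have hy0 : 0 < y := by linarith
  rw [← log_le_log_iff (by positivity) (by positivity), log_rpow hy0, log_rpow two_pos]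
  simp only [hg] at hgy
  linarith

open Nat Finset

theorem two_mul_pow_sqrt_add_two_mul_four_pow_le {n : ℕ} (hn : 512 ≤ n) :
    (2 * n) ^ (sqrt (2 * n) + 2) * 4 ^ (2 * n / 3) ≤ 4 ^ n := by
  have h2n : (1024 : ℝ) ≤ 2 * n := by exact_mod_cast (by omega : 1024 ≤ 2 * n)
  rw [← @cast_le ℝ]
  push_cast
  calc ((2 : ℝ) * n) ^ (sqrt (2 * n) + 2) * 4 ^ (2 * n / 3)
      ≤ (2 * n) ^ (√(2 * n) + 2) * (2 : ℝ) ^ (2 * (2 * n) / 3 : ℝ) := by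
        rw [← Real.rpow_natCast, ← Real.rpow_natCast]
        gcongr
        · linarith
        · have := Real.nat_sqrt_le_real_sqrt (a := 2 * n)
          push_cast at this ⊢
          linarith
        · rw [show (4 : ℝ) = 2 ^ (2 : ℝ) by norm_num, ← Real.rpow_mul zero_le_two]
          gcongr
          · norm_num
          · rw [mul_div_assoc]
            gcongr
            exact_mod_cast Nat.cast_div_le
    _ ≤ 2 ^ ((2 * n : ℝ) / 3) * 2 ^ (2 * (2 * n) / 3 : ℝ) := by
        gcongr
        exact rpow_sqrt_add_two_le_two_rpow h2n
    _ = 4 ^ n := by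
        rw [← Real.rpow_add two_pos, show (4 : ℝ) = 2 ^ (2 : ℝ) by norm_num,
          ← Real.rpow_mul_natCast zero_le_two]
        ring_nf

theorem prod_pow_factorization_centralBinom_le {n : ℕ} (hn : 0 < n) :
    ∏ ℓ ∈ range (2 * n / 3 + 1), ℓ ^ (centralBinom n).factorization ℓ
      ≤ (2 * n) ^ sqrt (2 * n) * 4 ^ (2 * n / 3) := by
  set f : ℕ → ℕ := fun ℓ => ℓ ^ (centralBinom n).factorization ℓ
  set P := {ℓ ∈ range (2 * n / 3 + 1) | ℓ.Prime}
  have hP : ∏ ℓ ∈ P, f ℓ = ∏ ℓ ∈ range (2 * n / 3 + 1), f ℓ :=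
    prod_filter_of_ne fun ℓ _ h => by
      contrapose! h
      simp only [f, factorization_eq_zero_of_not_prime _ h, pow_zero]
  rw [← hP, ← prod_filter_mul_prod_filter_not P (· ≤ sqrt (2 * n))]
  gcongr
  · calc ∏ ℓ ∈ P with ℓ ≤ sqrt (2 * n), f ℓ
        ≤ (2 * n) ^ #{ℓ ∈ P | ℓ ≤ sqrt (2 * n)} :=
          prod_le_pow_card _ _ _ fun ℓ _ => pow_factorization_choose_le (by omega)
      _ ≤ (2 * n) ^ sqrt (2 * n) := by
          refine pow_right_mono₀ (by omega) ((card_le_card fun ℓ hp => ?_).trans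
            (card_Icc 1 (sqrt (2 * n))).le)
          simp only [P, mem_filter] at hp
          exact mem_Icc.mpr ⟨hp.1.2.one_lt.le, hp.2⟩
  · calc ∏ ℓ ∈ P with ¬ℓ ≤ sqrt (2 * n), f ℓ
        ≤ ∏ ℓ ∈ P with ¬ℓ ≤ sqrt (2 * n), ℓ :=
          prod_le_prod' fun ℓ hp => by
            simp only [P, mem_filter, not_le] at hp
            exact (pow_le_pow_right₀ hp.1.2.one_lt.le
              (factorization_choose_le_one (sqrt_lt'.mp hp.2))).trans (pow_one ℓ).le
      _ ≤ primorial (2 * n / 3) :=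
          prod_le_prod_of_subset_of_one_le' (filter_subset _ _)
            fun ℓ hp _ => (mem_filter.1 hp).2.one_lt.le
      _ ≤ 4 ^ (2 * n / 3) := primorial_le_four_pow _

theorem centralBinom_le_mul_pow_card_primes {n : ℕ} (hn : 2 < n) :
    centralBinom n ≤
      (2 * n) ^ sqrt (2 * n) * 4 ^ (2 * n / 3) * (2 * n) ^ #{ℓ ∈ Ioc n (2 * n) | ℓ.Prime} := by
  set f : ℕ → ℕ := fun ℓ => ℓ ^ (centralBinom n).factorization ℓ
  have hlarge : ∏ ℓ ∈ Ico (2 * n / 3 + 1) (2 * n + 1), f ℓ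
      = ∏ ℓ ∈ Ioc n (2 * n) with ℓ.Prime, f ℓ := by
    refine (prod_subset (fun ℓ hp => ?_) fun ℓ hp hp' => ?_).symm
    · simp only [mem_filter, mem_Ioc] at hp
      simp only [mem_Ico]
      omega
    · simp only [mem_filter, mem_Ioc, not_and] at hp'
      simp only [mem_Ico] at hp
      by_cases hpp : ℓ.Prime
      · have hpn : ℓ ≤ n := by by_contra h; exact hp' ⟨by omega, by omega⟩ hpp
        have h3p : 2 * n < 3 * ℓ := by omega
        simp only [f, factorization_centralBinom_of_two_mul_self_lt_three_mul hn hpn h3p,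
          pow_zero]
      · simp only [f, factorization_eq_zero_of_not_prime _ hpp, pow_zero]
  rw [← prod_pow_factorization_centralBinom, range_eq_Ico,
    ← prod_Ico_consecutive _ (zero_le _) (by omega : 2 * n / 3 + 1 ≤ 2 * n + 1), ← range_eq_Ico,
    hlarge]
  gcongr
  · exact prod_pow_factorization_centralBinom_le (by omega)
  · exact prod_le_pow_card _ _ _ fun ℓ _ => pow_factorization_choose_le (by omega)

theorem one_lt_card_primes_Ioc_two_mul {n : ℕ} (hn : 512 ≤ n) :
    1 < #{ℓ ∈ Ioc n (2 * n) | ℓ.Prime} := by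
  by_contra! h
  have hpow : (2 * n) ^ #{ℓ ∈ Ioc n (2 * n) | ℓ.Prime} ≤ 2 * n :=
    (pow_le_pow_right₀ (by omega) h).trans (pow_one _).le
  have := calc 4 ^ n
      < n * centralBinom n := four_pow_lt_mul_centralBinom n (by omega)
    _ ≤ n * ((2 * n) ^ sqrt (2 * n) * 4 ^ (2 * n / 3) * (2 * n)) := by
        grw [centralBinom_le_mul_pow_card_primes (by omega), hpow]
    _ ≤ (2 * n) ^ (sqrt (2 * n) + 2) * 4 ^ (2 * n / 3) := by
        rw [pow_add]
        nlinarith [Nat.zero_le ((2 * n) ^ sqrt (2 * n) * 4 ^ (2 * n / 3))]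
    _ ≤ 4 ^ n := two_mul_pow_sqrt_add_two_mul_four_pow_le hn
  exact this.false

theorem exists_two_primes_of_covering {n : ℕ} (q s t : ℕ)
    (h : s.Prime ∧ t.Prime ∧ s < t ∧ t ≤ 2 * q + 1)
    (H : n < q → ∃ s t, s.Prime ∧ t.Prime ∧ n < s ∧ s < t ∧ t ≤ 2 * n + 1) (hn : n < s) :
    ∃ s t, s.Prime ∧ t.Prime ∧ n < s ∧ s < t ∧ t ≤ 2 * n + 1 := by
  by_cases hq : n < q
  · exact H hq
  · exact ⟨s, t, h.1, h.2.1, hn, h.2.2.1, by omega⟩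

theorem exists_two_primes_lt_and_le_two_mul_add_one {n : ℕ} (hn : n ≠ 0) :
    ∃ s t, s.Prime ∧ t.Prime ∧ n < s ∧ s < t ∧ t ≤ 2 * n + 1 := by
  rcases lt_or_ge n 512 with hsmall | hlarge
  · replace hsmall : n < 521 := by omega
    revert hsmall
    refine exists_two_primes_of_covering 263 521 523 (by norm_num) ?_
    refine exists_two_primes_of_covering 137 263 269 (by norm_num) ?_
    refine exists_two_primes_of_covering 71 137 139 (by norm_num) ?_
    refine exists_two_primes_of_covering 37 71 73 (by norm_num) ?_
    refine exists_two_primes_of_covering 23 37 41 (by norm_num) ?_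
    refine exists_two_primes_of_covering 17 23 29 (by norm_num) ?_
    refine exists_two_primes_of_covering 11 17 19 (by norm_num) ?_
    refine exists_two_primes_of_covering 7 11 13 (by norm_num) ?_
    refine exists_two_primes_of_covering 5 7 11 (by norm_num) ?_
    refine exists_two_primes_of_covering 3 5 7 (by norm_num) ?_
    refine exists_two_primes_of_covering 2 3 5 (by norm_num) ?_
    refine exists_two_primes_of_covering 1 2 3 (by norm_num) ?_
    omega
  · obtain ⟨a, ha, c, hc, hac⟩ := one_lt_card.mp (one_lt_card_primes_Ioc_two_mul hlarge)
    simp only [mem_filter, mem_Ioc] at ha hc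
    rcases hac.lt_or_gt with h | h
    · exact ⟨a, c, ha.2, hc.2, ha.1.1, h, by omega⟩
    · exact ⟨c, a, hc.2, ha.2, hc.1.1, h, by omega⟩

theorem b_eq_count (r : ℕ) : b r = count Nat.Prime (r + 1) := by
  rw [b, count_eq_card_filter_range]

theorem p_add_one (i : ℕ) : p (i + 1) = nth Nat.Prime i := by
  rw [p, Nat.add_sub_cancel]

theorem prime_p (i : ℕ) : (p i).Prime := prime_nth_prime _

theorem nth_prime_le_of_le_count {k x : ℕ} (hx : x.Prime) (hk : k ≤ count Nat.Prime x) :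
    nth Nat.Prime k ≤ x :=
  (nth_monotone infinite_setOfPred_prime hk).trans_eq (nth_count hx)

theorem lt_p_b_add_one (r : ℕ) : r < p (b r + 1) := by
  rw [p_add_one, b_eq_count]
  exact le_nth_count infinite_setOfPred_prime (r + 1)

theorem p_b_add_one_lt_p_b_add_two (r : ℕ) : p (b r + 1) < p (b r + 2) := by
  rw [p_add_one, p_add_one]
  exact nth_strictMono infinite_setOfPred_prime (Nat.lt_succ_self _)

section FirstPrimesAbove

variable {r : ℕ}

theorem p_b_add_one_le {x : ℕ} (hx : x.Prime) (hrx : r < x) : p (b r + 1) ≤ x := by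
  rw [p_add_one, b_eq_count]
  exact nth_prime_le_of_le_count hx (count_monotone _ hrx)

theorem p_b_add_two_le {s t : ℕ} (hs : s.Prime) (ht : t.Prime) (hrs : r < s) (hst : s < t) :
    p (b r + 2) ≤ t := by
  rw [p_add_one, b_eq_count]
  refine nth_prime_le_of_le_count ht ?_
  calc count Nat.Prime (r + 1) + 1 ≤ count Nat.Prime s + 1 := by grw [count_monotone Nat.Prime hrs]
    _ = count Nat.Prime (s + 1) := by rw [count_succ, if_pos hs]
    _ ≤ count Nat.Prime t := count_monotone _ hst

theorem p_b_add_one_le_two_mul (hr : r ≠ 0) : p (b r + 1) ≤ 2 * r := by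
  obtain ⟨s, hs, hrs, hs2⟩ := exists_prime_lt_and_le_two_mul r hr
  exact (p_b_add_one_le hs hrs).trans hs2

theorem p_b_add_two_le_two_mul_add_one (hr : r ≠ 0) : p (b r + 2) ≤ 2 * r + 1 := by
  obtain ⟨s, t, hs, ht, hrs, hst, ht2⟩ := exists_two_primes_lt_and_le_two_mul_add_one hr
  exact (p_b_add_two_le hs ht hrs hst).trans ht2

theorem p_b_add_two_le_p_b_add_one_add (hr : r ≠ 0) : p (b r + 2) ≤ p (b r + 1) + r := by
  have := lt_p_b_add_one r
  have := p_b_add_two_le_two_mul_add_one hr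
  omega

end FirstPrimesAbove

theorem S_eq_prod_factorization (r n : ℕ) :
    S r n = n.factorization.prod fun q e => q ^ (e - 1) * (q - r) := rfl

section Schemmel

variable {r : ℕ}

theorem S_mul {m n : ℕ} (h : m.Coprime n) : S r (m * n) = S r m * S r n := by
  rcases eq_or_ne m 0 with rfl | hm
  · simp [(Nat.coprime_zero_left n).mp h, S]
  rcases eq_or_ne n 0 with rfl | hn
  · simp [(Nat.coprime_zero_right m).mp h, S]
  simp only [S_eq_prod_factorization]
  rw [Nat.factorization_mul hm hn, Finsupp.prod_add_index_of_disjoint h.disjoint_primeFactors]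

theorem S_prime_pow {s e : ℕ} (hs : s.Prime) (he : e ≠ 0) :
    S r (s ^ e) = s ^ (e - 1) * (s - r) := by
  rw [S, primeFactors_prime_pow he hs, prod_singleton, hs.factorization_pow,
    Finsupp.single_eq_same]

theorem S_prime {q : ℕ} (hq : q.Prime) : S r q = q - r := by
  simpa using S_prime_pow (r := r) hq one_ne_zero

theorem S_mul_of_prime_of_ne {s t : ℕ} (hs : s.Prime) (ht : t.Prime) (hst : s ≠ t) :
    S r (s * t) = (s - r) * (t - r) := by
  rw [S_mul ((coprime_primes hs ht).mpr hst), S_prime hs, S_prime ht]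

theorem S_pos_iff {n : ℕ} : 0 < S r n ↔ ∀ q ∈ n.primeFactors, r < q := by
  simp only [S, pos_iff_ne_zero, prod_ne_zero_iff, mul_ne_zero_iff, Nat.sub_ne_zero_iff_lt]
  exact forall₂_congr fun q hq =>
    and_iff_right (pow_ne_zero _ (prime_of_mem_primeFactors hq).ne_zero)

theorem sub_mul_sub_le_S {n s t : ℕ} (hS : 0 < S r n) (hs : s ∈ n.primeFactors)
    (ht : t ∈ n.primeFactors) (hst : s ≠ t) : (s - r) * (t - r) ≤ S r n := by
  have hfactor : ∀ q ∈ n.primeFactors, q - r ≤ q ^ (n.factorization q - 1) * (q - r) :=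
    fun q hq => Nat.le_mul_of_pos_left _ (pow_pos (prime_of_mem_primeFactors hq).pos _)
  calc (s - r) * (t - r)
      ≤ ∏ q ∈ {s, t}, q ^ (n.factorization q - 1) * (q - r) := by
        rw [prod_pair hst]; exact Nat.mul_le_mul (hfactor s hs) (hfactor t ht)
    _ ≤ S r n :=
        prod_le_prod_of_subset_of_one_le' (insert_subset hs (singleton_subset_iff.mpr ht))
          fun q hq _ => one_le_iff_ne_zero.mpr (prod_ne_zero_iff.mp hS.ne' q hq)

theorem p_sub_mul_p_sub_le_S_of_not_prime {m : ℕ} (hr : r ≠ 0) (hm : 1 < m)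
    (hmp : ¬m.Prime) (hS : 0 < S r m) : (p (b r + 1) - r) * (p (b r + 2) - r) ≤ S r m := by
  have hpos := S_pos_iff.mp hS
  obtain ⟨s, hs⟩ := nonempty_primeFactors.mpr hm
  have hsp := prime_of_mem_primeFactors hs
  have hP₁s := p_b_add_one_le hsp (hpos s hs)
  by_cases hunique : ∀ d, d.Prime → d ∣ m → d = s
  · obtain ⟨k, rfl⟩ : ∃ k, m = s ^ k :=
      ⟨_, eq_prime_pow_of_unique_prime_dvd (by omega) fun hd hdm => hunique _ hd hdm⟩
    have hk : k - 1 ≠ 0 := by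
      rintro hk
      rcases Nat.le_one_iff_eq_zero_or_eq_one.mp (by omega : k ≤ 1) with rfl | rfl
      · simp at hm
      · exact hmp (by simpa using hsp)
    have hstar := p_b_add_two_le_p_b_add_one_add hr
    calc (p (b r + 1) - r) * (p (b r + 2) - r)
        ≤ (s - r) * s := Nat.mul_le_mul (by omega) (by omega)
      _ ≤ s ^ (k - 1) * (s - r) := by rw [mul_comm]; gcongr; exact le_self_pow₀ hsp.one_le hk
      _ = S r (s ^ k) := (S_prime_pow hsp (by omega)).symm
  · push Not at hunique
    obtain ⟨t, htp, htm, hts⟩ := hunique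
    have ht : t ∈ m.primeFactors := mem_primeFactors.mpr ⟨htp, htm, by omega⟩
    have hpair : ∀ a ∈ m.primeFactors, ∀ c ∈ m.primeFactors, a < c →
        (p (b r + 1) - r) * (p (b r + 2) - r) ≤ S r m := fun a ha c hc hac =>
      (Nat.mul_le_mul
        (Nat.sub_le_sub_right (p_b_add_one_le (prime_of_mem_primeFactors ha) (hpos a ha)) r)
        (Nat.sub_le_sub_right (p_b_add_two_le (prime_of_mem_primeFactors ha)
          (prime_of_mem_primeFactors hc) (hpos a ha) hac) r)).trans
      (sub_mul_sub_le_S hS ha hc hac.ne)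
    rcases hts.lt_or_gt with h | h
    exacts [hpair t ht s hs h, hpair s hs t ht h]

theorem sub_lt_S_of_lt {q m : ℕ} (hr : r ≠ 0)
    (hq : q < (p (b r + 1) - r) * (p (b r + 2) - r) + r) (hqm : q < m) (hS : 0 < S r m) :
    q - r < S r m := by
  by_cases hqr : q ≤ r
  · omega
  by_cases hmp : m.Prime
  · rw [S_prime hmp]; omega
  · have := p_sub_mul_p_sub_le_S_of_not_prime hr (by omega) hmp hS
    omega

theorem exists_lt_S_le_sub {q P₁ P₂ : ℕ} (hP₁ : P₁.Prime) (hP₂ : P₂.Prime) (hrP₁ : r < P₁)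
    (hP₁P₂ : P₁ < P₂) (hP₁r : P₁ ≤ 2 * r) (hq : (P₁ - r) * (P₂ - r) + r ≤ q) :
    ∃ m, q < m ∧ 0 < S r m ∧ S r m ≤ q - r := by
  by_cases hqP : q < P₁ * P₂
  · refine ⟨P₁ * P₂, hqP, ?_⟩
    rw [S_mul_of_prime_of_ne hP₁ hP₂ hP₁P₂.ne]
    exact ⟨Nat.mul_pos (by omega) (by omega), by omega⟩
  -- Otherwise take `P₁ * s` for a Bertrand prime `s` in `(q / P₁, 2 * (q / P₁)]`.
  have hP₂x : P₂ ≤ q / P₁ := (Nat.le_div_iff_mul_le hP₁.pos).mpr (by rw [mul_comm]; omega)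
  obtain ⟨s, hs, hxs, hs2x⟩ := exists_prime_lt_and_le_two_mul (q / P₁) (by omega)
  have hqs : q < P₁ * s :=
    (Nat.lt_mul_div_succ q hP₁.pos).trans_le (Nat.mul_le_mul_left _ hxs)
  refine ⟨P₁ * s, hqs, ?_⟩
  rw [S_mul_of_prime_of_ne hP₁ hs (by omega)]
  refine ⟨Nat.mul_pos (by omega) (by omega), ?_⟩
  have hP₁x : P₁ * (q / P₁) ≤ q := Nat.mul_div_le q P₁
  -- `(P₁ - r) (2 x - r) ≤ P₁ x - r` for `x = q / P₁`, because `r < P₁ ≤ 2 r`.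
  zify [hrP₁.le, (by omega : r ≤ s), (by omega : r ≤ q)] at *
  nlinarith

theorem SST_iff_of_prime {q : ℕ} (hq : q.Prime) :
    SST r q ↔ r < q ∧ ∀ m, q < m → 0 < S r m → q - r < S r m := by
  simp only [SST, S_prime hq, Nat.sub_pos_iff_lt]

end Schemmel

theorem stmt6 (q r : ℕ) (hq : q.Prime) (hr : 0 < r) :
    SST r q ↔ (r < q ∧ q < (p (b r + 1) - r) * (p (b r + 2) - r) + r) := by
  rw [SST_iff_of_prime hq]
  refine and_congr_right fun _ =>
    ⟨fun h => ?_, fun hbound m hqm hS => sub_lt_S_of_lt hr.ne' hbound hqm hS⟩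
  by_contra! hbound
  obtain ⟨m, hqm, hS, hSle⟩ := exists_lt_S_le_sub (prime_p _) (prime_p _) (lt_p_b_add_one r)
    (p_b_add_one_lt_p_b_add_two r) (p_b_add_one_le_two_mul hr.ne') hbound
  exact (h m hqm hS).not_ge hSle
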